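/- Suppose ⟨μ + ρ, β^∨⟩ ∈ ℤ_{>0} for some β ∈ Φ^+ \ Φ_I and μ ∈ λ + 𝒳_r. Then s_β · μ ∈ λ + 𝒳_r. -/

import Mathlib

open Finset

inductive RSType where
  | B
  | C
  | D
deriving DecidableEq

noncomputable def eps (n : ℕ) (i : Fin n) : Fin n → ℝ := fun j => if j = i then 1 else 0

noncomputable def simpleRoot (n : ℕ) (t : RSType) (i : Fin n) : Fin n → ℝ :=
  if (i : ℕ) + 1 < n then
    eps n i - (fun j : Fin n => if (j : ℕ) = (i : ℕ) + 1 then 1 else 0)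
  else
    match t with
    | RSType.B => eps n i
    | RSType.C => (2 : ℝ) • eps n i
    | RSType.D => (fun j : Fin n => if (j : ℕ) + 1 = (i : ℕ) then 1 else 0) + eps n i

noncomputable def inn (n : ℕ) (x y : Fin n → ℝ) : ℝ := ∑ i, x i * y i

noncomputable def pairing (n : ℕ) (x y : Fin n → ℝ) : ℝ := 2 * inn n x y / inn n y y

/-- Membership in `Λ^{𝔭_I}` where `I = Π \ {α_{p 1}, …, α_{p k}}`:
`⟨μ, α^∨⟩ ∈ ℕ` for all simple roots `α ∈ I`. -/
def inLam (n : ℕ) (t : RSType) (p : ℕ → ℕ) (k : ℕ) (μ : Fin n → ℝ) : Prop :=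
  ∀ i : Fin n, (∀ j, 1 ≤ j → j ≤ k → (i : ℕ) + 1 ≠ p j) →
    ∃ m : ℕ, pairing n μ (simpleRoot n t i) = (m : ℝ)

/-- `ρ`, the half sum of the positive roots. -/
noncomputable def rho (n : ℕ) (t : RSType) : Fin n → ℝ :=
  (1 / 2 : ℝ) •
    ((∑ q ∈ Finset.univ.filter (fun q : Fin n × Fin n => q.1 < q.2),
        ((eps n q.1 - eps n q.2) + (eps n q.1 + eps n q.2))) +
      match t with
      | RSType.B => ∑ i, eps n i
      | RSType.C => ∑ i, (2 : ℝ) • eps n i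
      | RSType.D => 0)

/-- `β ∈ Φ^+`. -/
def isPosRoot (n : ℕ) (t : RSType) (β : Fin n → ℝ) : Prop :=
  (∃ i j : Fin n, i < j ∧ (β = eps n i - eps n j ∨ β = eps n i + eps n j)) ∨
  (t = RSType.B ∧ ∃ i, β = eps n i) ∨
  (t = RSType.C ∧ ∃ i, β = (2 : ℝ) • eps n i)

/-- The simple roots lying in `I = Π \ {α_{p 1}, …, α_{p k}}`. -/
def Iroots (n : ℕ) (t : RSType) (p : ℕ → ℕ) (k : ℕ) : Set (Fin n → ℝ) :=
  {x | ∃ i : Fin n, (∀ j, 1 ≤ j → j ≤ k → (i : ℕ) + 1 ≠ p j) ∧ x = simpleRoot n t i}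

/-- `β ∈ Φ_I = Φ ∩ ℤI`. -/
def inPhiI (n : ℕ) (t : RSType) (p : ℕ → ℕ) (k : ℕ) (β : Fin n → ℝ) : Prop :=
  (isPosRoot n t β ∨ isPosRoot n t (-β)) ∧
    β ∈ Submodule.span ℤ (Iroots n t p k)

/-- The reflection `s_β(x) = x - ⟨x, β^∨⟩ β`. -/
noncomputable def sRefl (n : ℕ) (β : Fin n → ℝ) : (Fin n → ℝ) → (Fin n → ℝ) :=
  fun x => x - pairing n x β • β

/-- `𝒳_r = {a ∈ ℤ^n : Σ |a_i| ≤ r}`. -/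
def Xr (n : ℕ) (r : ℤ) : Set (Fin n → ℤ) := {a | ∑ i, |a i| ≤ r}

/-- `μ ∈ λ + 𝒳_r`. -/
def inLamX (n : ℕ) (lam : Fin n → ℝ) (r : ℕ) (μ : Fin n → ℝ) : Prop :=
  ∃ a : Fin n → ℤ, a ∈ Xr n (r : ℤ) ∧ μ = lam + fun i => (a i : ℝ)
lemma inn_eps (n : ℕ) (x : Fin n → ℝ) (i : Fin n) : inn n x (eps n i) = x i := by
  simp [inn, eps, mul_ite]

lemma pairing_sub (n : ℕ) (i j : Fin n) (hij : i ≠ j) (x : Fin n → ℝ) :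
    pairing n x (eps n i - eps n j) = x i - x j := by
  have h1 : inn n x (eps n i - eps n j) = x i - x j := by
    simp [inn, eps, mul_sub, Finset.sum_sub_distrib, mul_ite]
  have h2 : inn n (eps n i - eps n j) (eps n i - eps n j) = 2 := by
    simp [inn, eps, mul_sub, sub_mul, Finset.sum_sub_distrib, mul_ite, ite_and, hij, hij.symm]; norm_num
  rw [pairing, h1, h2]; ring

lemma pairing_add (n : ℕ) (i j : Fin n) (hij : i ≠ j) (x : Fin n → ℝ) :
    pairing n x (eps n i + eps n j) = x i + x j := by
  have h1 : inn n x (eps n i + eps n j) = x i + x j := by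
    simp [inn, eps, mul_add, Finset.sum_add_distrib, mul_ite]
  have h2 : inn n (eps n i + eps n j) (eps n i + eps n j) = 2 := by
    simp [inn, eps, mul_add, add_mul, Finset.sum_add_distrib, mul_ite, ite_and, hij, hij.symm]; norm_num
  rw [pairing, h1, h2]; ring

lemma pairing_epsB (n : ℕ) (i : Fin n) (x : Fin n → ℝ) :
    pairing n x (eps n i) = 2 * x i := by
  have h2 : inn n (eps n i) (eps n i) = 1 := by
    simp [inn, eps, mul_ite, ite_and]
  rw [pairing, inn_eps, h2]; ring

lemma pairing_epsC (n : ℕ) (i : Fin n) (x : Fin n → ℝ) :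
    pairing n x ((2:ℝ) • eps n i) = x i := by
  have h1 : inn n x ((2:ℝ) • eps n i) = 2 * x i := by
    simp [inn, eps, mul_ite, Finset.mul_sum, mul_comm]
  have h2 : inn n ((2:ℝ) • eps n i) ((2:ℝ) • eps n i) = 4 := by
    simp [inn, eps, mul_ite, ite_and]; norm_num
  rw [pairing, h1, h2]; ring
lemma sum_abs_two (n : ℕ) (a b : Fin n → ℤ) (i j : Fin n) (hij : i ≠ j)
    (hb : ∀ l, l ≠ i → l ≠ j → b l = a l) (h2 : |b i| + |b j| ≤ |a i| + |a j|) :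
    ∑ l, |b l| ≤ ∑ l, |a l| := by
  have key : ∀ f : Fin n → ℤ,
      ∑ l ∈ (univ : Finset (Fin n)) \ ({i, j} : Finset (Fin n)), f l + (f i + f j)
        = ∑ l, f l := by
    intro f
    rw [← Finset.sum_pair hij]
    exact Finset.sum_sdiff (by simp)
  have hc : ∑ l ∈ (univ : Finset (Fin n)) \ ({i, j} : Finset (Fin n)), |b l|
      = ∑ l ∈ (univ : Finset (Fin n)) \ ({i, j} : Finset (Fin n)), |a l| := by
    refine Finset.sum_congr rfl fun l hl => ?_
    simp only [Finset.mem_sdiff, Finset.mem_insert, Finset.mem_singleton] at hl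
    rw [hb l (by tauto) (by tauto)]
  have k1 := key fun l => |b l|
  have k2 := key fun l => |a l|
  omega

lemma sum_abs_one (n : ℕ) (a b : Fin n → ℤ) (i : Fin n)
    (hb : ∀ l, l ≠ i → b l = a l) (h2 : |b i| ≤ |a i|) :
    ∑ l, |b l| ≤ ∑ l, |a l| := by
  have key : ∀ f : Fin n → ℤ,
      ∑ l ∈ (univ : Finset (Fin n)).erase i, f l + f i = ∑ l, f l := fun f =>
    Finset.sum_erase_add _ _ (Finset.mem_univ i)
  have hc : ∑ l ∈ (univ : Finset (Fin n)).erase i, |b l|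
      = ∑ l ∈ (univ : Finset (Fin n)).erase i, |a l| := by
    refine Finset.sum_congr rfl fun l hl => ?_
    rw [hb l (Finset.ne_of_mem_erase hl)]
  have k1 := key fun l => |b l|
  have k2 := key fun l => |a l|
  omega

/-- Lemma 6.6: if `⟨μ+ρ, β^∨⟩ ∈ ℤ_{>0}` for some `β ∈ Φ^+ \ Φ_I` and
`μ ∈ λ + 𝒳_r`, then `s_β · μ ∈ λ + 𝒳_r`. -/
theorem stmt5 (n k : ℕ) (hn : 2 ≤ n) (t : RSType)
    (p : ℕ → ℕ) (hp0 : p 0 = 0)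
    (hmono : ∀ j, j < k → p j < p (j + 1))
    (hpk : p k ≤ n) (hpk1 : p (k + 1) = n)
    (hpkD : t = RSType.D → p k ≠ n - 1)
    (lam : Fin n → ℝ) (hlam : inLam n t p k lam)
    (hlam1 : ∀ β : Fin n → ℝ, isPosRoot n t β → ¬ inPhiI n t p k β →
      ¬ ∃ m : ℤ, 0 < m ∧ pairing n (lam + rho n t) β = (m : ℝ))
    (hlam2 : ∀ i : Fin n, (∀ j, 1 ≤ j → j ≤ k → (i : ℕ) + 1 ≠ p j) →
      pairing n (lam + rho n t) (simpleRoot n t i) = 1)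
    (r : ℕ) (β μ : Fin n → ℝ)
    (hβ : isPosRoot n t β) (hβI : ¬ inPhiI n t p k β)
    (hpair : ∃ m : ℤ, 0 < m ∧ pairing n (μ + rho n t) β = (m : ℝ))
    (hμ : inLamX n lam r μ) :
    inLamX n lam r (sRefl n β (μ + rho n t) - rho n t) := by
  obtain ⟨mm, hmpos, hpe⟩ := hpair
  obtain ⟨a, ha, hμeq⟩ := hμ
  have hnot := hlam1 β hβ hβI
  rcases hβ with ⟨i, j, hij, hcase | hcase⟩ | ⟨-, i, hcase⟩ | ⟨-, i, hcase⟩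
  · -- β = eps i - eps j
    have hne : i ≠ j := ne_of_lt hij
    subst hcase
    have hmm' : μ i + rho n t i - (μ j + rho n t j) = (mm : ℝ) := by
      rw [pairing_sub n i j hne] at hpe; simpa using hpe
    have hkey : mm ≤ a i - a j := by
      by_contra hcon; push_neg at hcon
      refine hnot ⟨mm - (a i - a j), by omega, ?_⟩
      rw [pairing_sub n i j hne]
      rw [hμeq] at hmm'
      simp only [Pi.add_apply] at hmm' ⊢
      push_cast at hmm' ⊢
      linarith
    have hineq : |a i - mm| + |a j + mm| ≤ |a i| + |a j| := by
      simp only [Int.abs_eq_natAbs]; omega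
    refine ⟨fun l => if l = i then a i - mm else if l = j then a j + mm else a l,
      le_trans (sum_abs_two n a _ i j hne (fun l h1 h2 => by simp [h1, h2])
        (by simpa [Ne.symm hne] using hineq)) ha, ?_⟩
    rw [sRefl, pairing_sub n i j hne]
    have hval : (μ + rho n t) i - (μ + rho n t) j = (mm : ℝ) := by
      simp only [Pi.add_apply]; linarith
    rw [hval, hμeq]
    funext l
    simp only [Pi.add_apply, Pi.sub_apply, Pi.smul_apply, smul_eq_mul, eps]
    by_cases h1 : l = i
    · subst h1
      simp only [if_pos rfl, if_neg hne]
      push_cast; ring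
    · by_cases h2 : l = j
      · subst h2
        simp only [if_neg h1, if_pos rfl]
        push_cast; ring
      · simp only [if_neg h1, if_neg h2]
        push_cast; ring
  · -- β = eps i + eps j
    have hne : i ≠ j := ne_of_lt hij
    subst hcase
    have hmm' : μ i + rho n t i + (μ j + rho n t j) = (mm : ℝ) := by
      rw [pairing_add n i j hne] at hpe; simpa using hpe
    have hkey : mm ≤ a i + a j := by
      by_contra hcon; push_neg at hcon
      refine hnot ⟨mm - (a i + a j), by omega, ?_⟩
      rw [pairing_add n i j hne]
      rw [hμeq] at hmm'
      simp only [Pi.add_apply] at hmm' ⊢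
      push_cast at hmm' ⊢
      linarith
    have hineq : |a i - mm| + |a j - mm| ≤ |a i| + |a j| := by
      simp only [Int.abs_eq_natAbs]; omega
    refine ⟨fun l => if l = i then a i - mm else if l = j then a j - mm else a l,
      le_trans (sum_abs_two n a _ i j hne (fun l h1 h2 => by simp [h1, h2])
        (by simpa [Ne.symm hne] using hineq)) ha, ?_⟩
    rw [sRefl, pairing_add n i j hne]
    have hval : (μ + rho n t) i + (μ + rho n t) j = (mm : ℝ) := by
      simp only [Pi.add_apply]; linarith
    rw [hval, hμeq]
    funext l
    simp only [Pi.add_apply, Pi.sub_apply, Pi.smul_apply, smul_eq_mul, eps]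
    by_cases h1 : l = i
    · subst h1
      simp only [if_pos rfl, if_neg hne]
      push_cast; ring
    · by_cases h2 : l = j
      · subst h2
        simp only [if_neg h1, if_pos rfl]
        push_cast; ring
      · simp only [if_neg h1, if_neg h2]
        push_cast; ring
  · -- β = eps i, type B
    subst hcase
    have hmm' : 2 * (μ i + rho n t i) = (mm : ℝ) := by
      rw [pairing_epsB n i] at hpe; simpa using hpe
    have hkey : mm ≤ 2 * a i := by
      by_contra hcon; push_neg at hcon
      refine hnot ⟨mm - 2 * a i, by omega, ?_⟩
      rw [pairing_epsB n i]
      rw [hμeq] at hmm'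
      simp only [Pi.add_apply] at hmm' ⊢
      push_cast at hmm' ⊢
      linarith
    have hineq : |a i - mm| ≤ |a i| := by
      simp only [Int.abs_eq_natAbs]; omega
    refine ⟨fun l => if l = i then a i - mm else a l,
      le_trans (sum_abs_one n a _ i (fun l h1 => by simp [h1])
        (by simpa using hineq)) ha, ?_⟩
    rw [sRefl, pairing_epsB n i]
    have hval : 2 * (μ + rho n t) i = (mm : ℝ) := by
      simp only [Pi.add_apply]; linarith
    rw [hval, hμeq]
    funext l
    simp only [Pi.add_apply, Pi.sub_apply, Pi.smul_apply, smul_eq_mul, eps]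
    by_cases h1 : l = i
    · subst h1
      simp only [if_pos rfl]
      push_cast; ring
    · simp only [if_neg h1]
      push_cast; ring
  · -- β = 2 • eps i, type C
    subst hcase
    have hmm' : μ i + rho n t i = (mm : ℝ) := by
      rw [pairing_epsC n i] at hpe; simpa using hpe
    have hkey : mm ≤ a i := by
      by_contra hcon; push_neg at hcon
      refine hnot ⟨mm - a i, by omega, ?_⟩
      rw [pairing_epsC n i]
      rw [hμeq] at hmm'
      simp only [Pi.add_apply] at hmm' ⊢
      push_cast at hmm' ⊢
      linarith
    have hineq : |a i - 2 * mm| ≤ |a i| := by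
      simp only [Int.abs_eq_natAbs]; omega
    refine ⟨fun l => if l = i then a i - 2 * mm else a l,
      le_trans (sum_abs_one n a _ i (fun l h1 => by simp [h1])
        (by simpa using hineq)) ha, ?_⟩
    rw [sRefl, pairing_epsC n i]
    have hval : (μ + rho n t) i = (mm : ℝ) := by
      simp only [Pi.add_apply]; linarith
    rw [hval, hμeq]
    funext l
    simp only [Pi.add_apply, Pi.sub_apply, Pi.smul_apply, smul_eq_mul, eps]
    by_cases h1 : l = i
    · subst h1
      simp only [if_pos rfl]
      push_cast; ring
    · simp only [if_neg h1]
      push_cast; ring
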